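/- arXiv:2504.20005 — 2 statements merged into one kernel-verified Lean document; each statement's English description precedes it below -/
import Mathlib

section
/- With the 7-dimensional Lie algebra of the previous statement (k ∈ ℕ, k ≥ 1 fixed), for every nonzero u ∈ g2 the operator J_u is invertible; i.e. the group G_k is a Métivier group. -/
open Matrix

/-- The matrix of `J_u` in the basis `(X0,X1,X2,X3)`, where `c = 1/k`. -/
def Jmat (c : ℝ) (u : Fin 3 → ℝ) : Matrix (Fin 4) (Fin 4) ℝ :=
  !![0, -u 0, -u 1, -u 2;
     u 0, 0, -c * u 2, c * u 1;
     u 1, c * u 2, 0, -c * u 0;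
     u 2, -c * u 1, c * u 0, 0]

/-- The bracket `[·,·]_k : g1 × g1 → g2` in coordinates, where `c = 1/k`:
`[X0,Xi] = Yi`, `[X1,X2] = c Y3`, `[X1,X3] = -c Y2`, `[X2,X3] = c Y1`. -/
def brk (c : ℝ) (v w : Fin 4 → ℝ) : Fin 3 → ℝ :=
  ![v 0 * w 1 - v 1 * w 0 + c * (v 2 * w 3 - v 3 * w 2),
    v 0 * w 2 - v 2 * w 0 - c * (v 1 * w 3 - v 3 * w 1),
    v 0 * w 3 - v 3 * w 0 + c * (v 1 * w 2 - v 2 * w 1)]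

theorem Jmat_det (c : ℝ) (u : Fin 3 → ℝ) : (Jmat c u).det = (c * (u ⬝ᵥ u)) ^ 2 := by
  simp [Jmat, det_succ_row_zero, Fin.sum_univ_succ, dotProduct, Fin.succAbove]
  ring

theorem Jmat_isUnit_iff (c : ℝ) (u : Fin 3 → ℝ) : IsUnit (Jmat c u) ↔ c ≠ 0 ∧ u ≠ 0 := by
  rw [isUnit_iff_isUnit_det, isUnit_iff_ne_zero, Jmat_det, pow_ne_zero_iff two_ne_zero,
    mul_ne_zero_iff, Ne, Ne, dotProduct_self_eq_zero]

/-- For every `k ≥ 1` and nonzero `u ∈ g2 ≅ ℝ³`, the operator `J_u`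
is invertible; i.e. the group `G_k` is a Métivier (ideal) group. -/
theorem Jmat_invertible (k : ℕ) (hk : 1 ≤ k) :
    ∀ u : Fin 3 → ℝ, u ≠ 0 → IsUnit (Jmat (k : ℝ)⁻¹ u) := by
  intro u hu
  have hk₀ : (k : ℝ) ≠ 0 := Nat.cast_ne_zero.2 (Nat.one_le_iff_ne_zero.1 hk)
  exact (Jmat_isUnit_iff _ u).2 ⟨inv_ne_zero hk₀, hu⟩
end

section
/- For the matrix J_u = [[0, −u1, −u2, −u3], [u1, 0, −u3/k, u2/k], [u2, u3/k, 0, −u1/k], [u3, −u2/k, u1/k, 0]] with k ≥ 1 and (u1,u2,u3) ≠ (0,0,0), the determinant of J_u is strictly positive. -/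
/-! `J_u` is skew-symmetric, so its determinant is the square of its Pfaffian, which here is
`|u|² / k`; hence `det J_u = (|u|² / k)² > 0` for `u ≠ 0`. -/

open Matrix

theorem Jmat_det_pos_of_ne_zero {c : ℝ} (hc : c ≠ 0) {u : Fin 3 → ℝ} (hu : u ≠ 0) :
    0 < (Jmat c u).det := by
  rw [Jmat_det, sq_pos_iff]
  exact mul_ne_zero hc (dotProduct_self_eq_zero.not.mpr hu)

/-- For `k ≥ 1` and `(u1,u2,u3) ≠ (0,0,0)`, the determinant of `J_u`
is strictly positive. -/
theorem Jmat_det_pos (k : ℕ) (hk : 1 ≤ k) :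
    ∀ u : Fin 3 → ℝ, u ≠ 0 → 0 < (Jmat (k : ℝ)⁻¹ u).det := by
  intro u hu
  have hk₀ : (k : ℝ) ≠ 0 := by exact_mod_cast Nat.one_le_iff_ne_zero.mp hk
  exact Jmat_det_pos_of_ne_zero (inv_ne_zero hk₀) hu
end
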